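/- arXiv:1601.05179 — 5 statements merged into one kernel-verified Lean document; each statement's English description precedes it below -/
import Mathlib

section
/- For all x > 0, define γ(x) = -sqrt(2(x - 1 - ln x)) if x ≤ 1 and γ(x) = +sqrt(2(x - 1 - ln x)) if x > 1. Then γ is strictly increasing on (0, ∞). -/
noncomputable def gammaSLL (x : ℝ) : ℝ :=
  if x ≤ 1 then -Real.sqrt (2 * (x - 1 - Real.log x))
  else Real.sqrt (2 * (x - 1 - Real.log x))

/-!
The function `f x = x - 1 - log x` is nonnegative, strictly decreasing on `(0, 1]` and
strictly increasing on `[1, ∞)`, both by the tangent-line bound `log t < t - 1` for `t ≠ 1`.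
Hence `γ = -√(2f)` increases on `(0, 1]` and `γ = √(2f)` increases on `[1, ∞)`; the two
pieces meet at `γ 1 = 0`.
-/

open Real Set

namespace Real

lemma sub_one_sub_log_nonneg {x : ℝ} (hx : 0 < x) : 0 ≤ x - 1 - log x := by
  linarith [log_le_sub_one_of_pos hx]

lemma strictAntiOn_sub_one_sub_log : StrictAntiOn (fun x ↦ x - 1 - log x) (Ioc 0 1) := by
  rintro x ⟨hx, -⟩ y ⟨hy, hy1⟩ hxy
  have hlog : log (x / y) < x / y - 1 :=
    log_lt_sub_one_of_pos (div_pos hx hy) (div_ne_one_of_ne hxy.ne)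
  rw [log_div hx.ne' hy.ne'] at hlog
  have hdiv : y - x ≤ 1 - x / y := by
    rw [one_sub_div hy.ne', le_div_iff₀ hy]
    nlinarith
  dsimp only
  linarith

lemma strictMonoOn_sub_one_sub_log : StrictMonoOn (fun x ↦ x - 1 - log x) (Ici 1) := by
  intro x (hx1 : 1 ≤ x) y (hy1 : 1 ≤ y) hxy
  have hx : 0 < x := by linarith
  have hlog : log (y / x) < y / x - 1 :=
    log_lt_sub_one_of_pos (div_pos (by linarith) hx) (div_ne_one_of_ne hxy.ne')
  rw [log_div (by linarith) hx.ne'] at hlog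
  have hdiv : y / x - 1 ≤ y - x := by
    rw [div_sub_one hx.ne', div_le_iff₀ hx]
    nlinarith
  dsimp only
  linarith

end Real

lemma gammaSLL_of_one_le {x : ℝ} (hx : 1 ≤ x) : gammaSLL x = √(2 * (x - 1 - log x)) := by
  rcases hx.eq_or_lt with rfl | hx
  · simp [gammaSLL]
  · exact if_neg hx.not_ge

lemma gammaSLL_strictMonoOn_Ioc : StrictMonoOn gammaSLL (Ioc 0 1) := by
  intro x hx y hy hxy
  rw [gammaSLL, gammaSLL, if_pos hx.2, if_pos hy.2, neg_lt_neg_iff]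
  have := strictAntiOn_sub_one_sub_log hx hy hxy
  exact sqrt_lt_sqrt (by linarith [sub_one_sub_log_nonneg hy.1]) (by linarith)

lemma gammaSLL_strictMonoOn_Ici : StrictMonoOn gammaSLL (Ici 1) := by
  intro x (hx : 1 ≤ x) y (hy : 1 ≤ y) hxy
  rw [gammaSLL_of_one_le hx, gammaSLL_of_one_le hy]
  have := strictMonoOn_sub_one_sub_log hx hy hxy
  exact sqrt_lt_sqrt (by linarith [sub_one_sub_log_nonneg (x := x) (by linarith)]) (by linarith)

theorem gammaSLL_strictMonoOn : StrictMonoOn gammaSLL (Set.Ioi (0 : ℝ)) := by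
  rw [← Ioc_union_Ici_eq_Ioi one_pos]
  exact gammaSLL_strictMonoOn_Ioc.union gammaSLL_strictMonoOn_Ici
    (isGreatest_Ioc one_pos) isLeast_Ici
end

section
/- For all x > 0 with x ≠ 1, the function x ↦ γ(x)/(x-1) is strictly decreasing on (0,∞)\{1}, where γ(x) = sign(x-1)·sqrt(2(x - 1 - ln x)). -/
/-! γ(x)/(x-1) is the square root of g(x) = 2(x-1-log x)/(x-1)², so it suffices that g is
strictly decreasing on (0,∞)∖{1}. On each side of 1 this follows from g' = 2q/(x-1)³ with
q(x) = 2 log x - (x - 1/x); across 1 from g - 1 = p/(x-1)² with p(x) = 2(x-1-log x) - (x-1)².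
Both q and p vanish at 1 and have negative derivative off 1, so they have the sign of 1 - x. -/

open Set Real

theorem strictAntiOn_Ioi_of_hasDerivAt_neg_of_ne {f f' : ℝ → ℝ} {a c : ℝ} (hac : a < c)
    (hf : ∀ x ∈ Ioi a, HasDerivAt f (f' x) x) (hf' : ∀ x ∈ Ioi a, x ≠ c → f' x < 0) :
    StrictAntiOn f (Ioi a) := by
  have hcont : ContinuousOn f (Ioi a) := fun x hx => (hf x hx).continuousAt.continuousWithinAt
  rw [← Ioc_union_Ici_eq_Ioi hac]
  refine StrictAntiOn.union ?_ ?_ (isGreatest_Ioc hac) isLeast_Ici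
  · refine strictAntiOn_of_deriv_neg (convex_Ioc a c) (hcont.mono Ioc_subset_Ioi_self) ?_
    intro x hx
    rw [interior_Ioc] at hx
    rw [(hf x hx.1).deriv]
    exact hf' x hx.1 hx.2.ne
  · refine strictAntiOn_of_deriv_neg (convex_Ici c) (hcont.mono (Ici_subset_Ioi.2 hac)) ?_
    intro x hx
    rw [interior_Ici] at hx
    have hax : x ∈ Ioi a := hac.trans hx
    rw [(hf x hax).deriv]
    exact hf' x hax (ne_of_gt hx)

theorem StrictAntiOn.mul_sub_neg {f : ℝ → ℝ} {s : Set ℝ} {c x : ℝ} (hf : StrictAntiOn f s)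
    (hc : c ∈ s) (hfc : f c = 0) (hx : x ∈ s) (hxc : x ≠ c) : f x * (x - c) < 0 := by
  rcases hxc.lt_or_gt with hlt | hgt
  · exact mul_neg_of_pos_of_neg (hfc ▸ hf hx hc hlt) (sub_neg.2 hlt)
  · exact mul_neg_of_neg_of_pos (hfc ▸ hf hc hx hgt) (sub_pos.2 hgt)

theorem two_mul_log_sub_sub_inv_mul_sub_one_neg {x : ℝ} (hx : 0 < x) (hx1 : x ≠ 1) :
    (2 * log x - (x - x⁻¹)) * (x - 1) < 0 := by
  have hderiv : ∀ y ∈ Ioi (0 : ℝ),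
      HasDerivAt (fun y => 2 * log y - (y - y⁻¹)) (-((y - 1) ^ 2 / y ^ 2)) y := by
    intro y (hy : 0 < y)
    refine (((hasDerivAt_log hy.ne').const_mul 2).fun_sub
      ((hasDerivAt_id' y).fun_sub (hasDerivAt_inv hy.ne'))).congr_deriv ?_
    field_simp
    ring
  have hanti := strictAntiOn_Ioi_of_hasDerivAt_neg_of_ne one_pos hderiv fun y hy hy1 =>
    neg_neg_of_pos (div_pos (sq_pos_of_ne_zero (sub_ne_zero.2 hy1)) (pow_pos hy 2))
  simpa using hanti.mul_sub_neg (mem_Ioi.2 one_pos) (by simp) hx hx1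

theorem two_mul_sub_one_sub_log_sub_sq_mul_sub_one_neg {x : ℝ} (hx : 0 < x) (hx1 : x ≠ 1) :
    (2 * (x - 1 - log x) - (x - 1) ^ 2) * (x - 1) < 0 := by
  have hderiv : ∀ y ∈ Ioi (0 : ℝ),
      HasDerivAt (fun y => 2 * (y - 1 - log y) - (y - 1) ^ 2) (-(2 * (y - 1) ^ 2 / y)) y := by
    intro y (hy : 0 < y)
    refine (((((hasDerivAt_id' y).sub_const 1).fun_sub (hasDerivAt_log hy.ne')).const_mul 2)
      |>.fun_sub (((hasDerivAt_id' y).sub_const 1).fun_pow 2)).congr_deriv ?_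
    field_simp
    ring
  have hanti := strictAntiOn_Ioi_of_hasDerivAt_neg_of_ne one_pos hderiv fun y hy hy1 =>
    neg_neg_of_pos (div_pos (mul_pos two_pos (sq_pos_of_ne_zero (sub_ne_zero.2 hy1))) hy)
  simpa using hanti.mul_sub_neg (mem_Ioi.2 one_pos) (by simp) hx hx1

noncomputable def gammaSLLRatioSq (x : ℝ) : ℝ := 2 * (x - 1 - log x) / (x - 1) ^ 2

theorem gammaSLL_div_sub_one_eq_sqrt (x : ℝ) :
    gammaSLL x / (x - 1) = √(gammaSLLRatioSq x) := by
  rw [gammaSLLRatioSq, sqrt_div' _ (sq_nonneg _), sqrt_sq_eq_abs, gammaSLL]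
  split_ifs with hx
  · rw [abs_of_nonpos (sub_nonpos.2 hx), div_neg, neg_div]
  · rw [abs_of_pos (sub_pos.2 (not_le.1 hx))]

theorem gammaSLLRatioSq_nonneg {x : ℝ} (hx : 0 < x) : 0 ≤ gammaSLLRatioSq x :=
  div_nonneg (by linarith [log_le_sub_one_of_pos hx]) (sq_nonneg _)

theorem hasDerivAt_gammaSLLRatioSq {x : ℝ} (hx : 0 < x) (hx1 : x ≠ 1) :
    HasDerivAt gammaSLLRatioSq (2 * (2 * log x - (x - x⁻¹)) / (x - 1) ^ 3) x := by
  have hx1' : x - 1 ≠ 0 := sub_ne_zero.2 hx1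
  refine (((((hasDerivAt_id' x).sub_const 1).fun_sub (hasDerivAt_log hx.ne')).const_mul 2).div
    (((hasDerivAt_id' x).sub_const 1).fun_pow 2) (pow_ne_zero 2 hx1')).congr_deriv ?_
  field_simp
  ring

theorem strictAntiOn_gammaSLLRatioSq {D : Set ℝ} (hD : Convex ℝ D) (hD1 : D ⊆ Ioi 0 \ {1}) :
    StrictAntiOn gammaSLLRatioSq D := by
  refine strictAntiOn_of_deriv_neg hD (fun x hx => ?_) fun x hx => ?_
  · obtain ⟨hx0, hx1⟩ := hD1 hx
    exact (hasDerivAt_gammaSLLRatioSq hx0 hx1).continuousAt.continuousWithinAt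
  · obtain ⟨hx0 : 0 < x, hx1 : x ≠ 1⟩ := hD1 (interior_subset hx)
    have hx1' : x - 1 ≠ 0 := sub_ne_zero.2 hx1
    rw [(hasDerivAt_gammaSLLRatioSq hx0 hx1).deriv]
    have hsign := two_mul_log_sub_sub_inv_mul_sub_one_neg hx0 hx1
    calc 2 * (2 * log x - (x - x⁻¹)) / (x - 1) ^ 3
        = 2 * ((2 * log x - (x - x⁻¹)) * (x - 1)) / ((x - 1) ^ 2) ^ 2 := by
          field_simp
      _ < 0 := div_neg_of_neg_of_pos (by linarith) (pow_pos (sq_pos_of_ne_zero hx1') 2)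

theorem gammaSLLRatioSq_sub_one_mul_sub_one_neg {x : ℝ} (hx : 0 < x) (hx1 : x ≠ 1) :
    (gammaSLLRatioSq x - 1) * (x - 1) < 0 := by
  have hx1' : x - 1 ≠ 0 := sub_ne_zero.2 hx1
  have hsign := two_mul_sub_one_sub_log_sub_sq_mul_sub_one_neg hx hx1
  calc (gammaSLLRatioSq x - 1) * (x - 1)
      = (2 * (x - 1 - log x) - (x - 1) ^ 2) * (x - 1) / (x - 1) ^ 2 := by
        rw [gammaSLLRatioSq]
        field_simp
    _ < 0 := div_neg_of_neg_of_pos hsign (sq_pos_of_ne_zero hx1')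

theorem gammaSLL_div_strictAntiOn :
    StrictAntiOn (fun x => gammaSLL x / (x - 1)) (Set.Ioi (0 : ℝ) \ {1}) := by
  intro x ⟨hx0, hx1⟩ y ⟨hy0, hy1⟩ hxy
  simp only [gammaSLL_div_sub_one_eq_sqrt]
  refine sqrt_lt_sqrt (gammaSLLRatioSq_nonneg hy0) ?_
  rcases (Ne.lt_or_gt hy1 : y < 1 ∨ 1 < y) with hy1 | hy1
  · exact strictAntiOn_gammaSLLRatioSq (convex_Ioo 0 1)
      (fun z hz => ⟨hz.1, hz.2.ne⟩) ⟨hx0, hxy.trans hy1⟩ ⟨hy0, hy1⟩ hxy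
  rcases (Ne.lt_or_gt hx1 : x < 1 ∨ 1 < x) with hx1 | hx1
  · have hgx := pos_of_mul_neg_left (gammaSLLRatioSq_sub_one_mul_sub_one_neg hx0 hx1.ne)
      (sub_nonpos.2 hx1.le)
    have hgy := neg_of_mul_neg_left (gammaSLLRatioSq_sub_one_mul_sub_one_neg hy0 hy1.ne')
      (sub_nonneg.2 hy1.le)
    linarith
  · exact strictAntiOn_gammaSLLRatioSq (convex_Ioi 1)
      (fun z (hz : 1 < z) => ⟨one_pos.trans hz, hz.ne'⟩) hx1 hy1 hxy
end

section
/- Let X have the exponential distribution with mean θ and let G(x) = γ(x/θ) where γ(x) = sign(x-1)·sqrt(2(x-1-ln x)). Then G(X) is stochastically dominated by a standard Gaussian random variable; equivalently, Φ(γ(x/θ)) ≤ 1 - exp(-x/θ) for all x > 0. -/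
/-!
Put `u = x / θ` and `cdfGap u = (1 - exp (-u)) - Φ (γ u)`, which tends to `0` both as `u → 0⁺`
and as `u → ∞`. Since `φ (γ u) = e u e^{-u} / √(2π)` and `γ' u = (1 - u⁻¹) / γ u`,
`cdfGap' u = e^{-u} (1 - e (u - 1) / (√(2π) γ u))`, so the sign of `cdfGap'` is decided by
comparing `√(2π) γ u` with `e (u - 1)`. The Padé bound `log u ≷ 2 (u - 1) / (u + 1)` (for `u ≷ 1`)
squeezes `γ u ^ 2` against `2 (u - 1) ^ 2 / (u + 1)`, which settles the comparison both for
`u ≥ 1` and for `u ≤ 7/10 < 4π/e² - 1`: `cdfGap` decreases to `0` on `(1, ∞)` and increases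
from `0` on `(0, 7/10]`. On `[7/10, 1]` we have `γ u ≤ 0`, so `Φ (γ u) ≤ 1/2 ≤ 1 - e^{-u}`
because `7/10 > log 2`.
-/

open MeasureTheory

noncomputable def stdGaussianCDF (t : ℝ) : ℝ :=
  ∫ x in Set.Iic t, Real.exp (-x ^ 2 / 2) / Real.sqrt (2 * Real.pi)

open Real Set Filter Topology ProbabilityTheory

lemma stdGaussianCDF_eq_setIntegral (t : ℝ) :
    stdGaussianCDF t = ∫ x in Iic t, gaussianPDFReal 0 1 x := by
  simp only [stdGaussianCDF, gaussianPDFReal, NNReal.coe_one, mul_one, sub_zero, div_eq_inv_mul]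

lemma stdGaussianCDF_eq_cdf : stdGaussianCDF = cdf (gaussianReal 0 1) := by
  ext t
  rw [cdf_eq_real, measureReal_def, gaussianReal_apply_eq_integral _ one_ne_zero,
    ENNReal.toReal_ofReal
      (setIntegral_nonneg measurableSet_Iic fun x _ ↦ gaussianPDFReal_nonneg _ _ x),
    stdGaussianCDF_eq_setIntegral]

lemma monotone_stdGaussianCDF : Monotone stdGaussianCDF :=
  stdGaussianCDF_eq_cdf ▸ monotone_cdf _

lemma tendsto_stdGaussianCDF_atTop : Tendsto stdGaussianCDF atTop (𝓝 1) :=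
  stdGaussianCDF_eq_cdf ▸ tendsto_cdf_atTop _

lemma tendsto_stdGaussianCDF_atBot : Tendsto stdGaussianCDF atBot (𝓝 0) :=
  stdGaussianCDF_eq_cdf ▸ tendsto_cdf_atBot _

lemma continuous_gaussianPDFReal (μ : ℝ) (v : NNReal) : Continuous (gaussianPDFReal μ v) := by
  unfold gaussianPDFReal; fun_prop

lemma hasDerivAt_stdGaussianCDF (t : ℝ) :
    HasDerivAt stdGaussianCDF (gaussianPDFReal 0 1 t) t := by
  have hint := integrable_gaussianPDFReal 0 1
  have hcdf (s : ℝ) :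
      stdGaussianCDF s = stdGaussianCDF 0 + ∫ x in (0)..s, gaussianPDFReal 0 1 x := by
    rw [stdGaussianCDF_eq_setIntegral, stdGaussianCDF_eq_setIntegral,
      ← intervalIntegral.integral_Iic_sub_Iic hint.integrableOn hint.integrableOn]
    ring
  rw [funext hcdf]
  exact (intervalIntegral.integral_hasDerivAt_right hint.intervalIntegrable
    ((continuous_gaussianPDFReal 0 1).stronglyMeasurableAtFilter _ _)
    (continuous_gaussianPDFReal 0 1).continuousAt).const_add _

lemma stdGaussianCDF_zero : stdGaussianCDF 0 = 1 / 2 := by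
  have hint := integrable_gaussianPDFReal 0 1
  have hsymm : ∫ x in Ioi 0, gaussianPDFReal 0 1 x = ∫ x in Iic 0, gaussianPDFReal 0 1 x := by
    rw [← neg_zero, ← integral_comp_neg_Iic]
    simp [gaussianPDFReal]
  have htotal := intervalIntegral.integral_Iic_add_Ioi (b := 0) hint.integrableOn hint.integrableOn
  rw [integral_gaussianPDFReal_eq_one 0 one_ne_zero, hsymm] at htotal
  rw [stdGaussianCDF_eq_setIntegral]
  linarith

noncomputable def expDeviance (u : ℝ) : ℝ := 2 * (u - 1 - log u)

lemma expDeviance_nonneg {u : ℝ} (hu : 0 < u) : 0 ≤ expDeviance u := by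
  have := log_le_sub_one_of_pos hu
  unfold expDeviance; linarith

lemma expDeviance_pos {u : ℝ} (hu : 0 < u) (hu1 : u ≠ 1) : 0 < expDeviance u := by
  have := log_lt_sub_one_of_pos hu hu1
  unfold expDeviance; linarith

lemma hasDerivAt_expDeviance {u : ℝ} (hu : 0 < u) :
    HasDerivAt expDeviance (2 * (1 - u⁻¹)) u :=
  (((hasDerivAt_id u).sub_const 1).sub (hasDerivAt_log hu.ne')).const_mul 2

lemma gammaSLL_of_le_one {u : ℝ} (hu : u ≤ 1) : gammaSLL u = -√(expDeviance u) := by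
  simp [gammaSLL, hu, expDeviance]

lemma gammaSLL_of_one_lt {u : ℝ} (hu : 1 < u) : gammaSLL u = √(expDeviance u) := by
  simp [gammaSLL, hu.not_ge, expDeviance]

lemma gammaSLL_sq {u : ℝ} (hu : 0 < u) : gammaSLL u ^ 2 = expDeviance u := by
  rcases le_or_gt u 1 with h | h
  · rw [gammaSLL_of_le_one h, neg_sq, sq_sqrt (expDeviance_nonneg hu)]
  · rw [gammaSLL_of_one_lt h, sq_sqrt (expDeviance_nonneg hu)]

lemma gaussianPDFReal_gammaSLL {u : ℝ} (hu : 0 < u) :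
    gaussianPDFReal 0 1 (gammaSLL u) = exp 1 * u * exp (-u) / √(2 * π) := by
  have hexp : exp (-gammaSLL u ^ 2 / 2) = exp 1 * u * exp (-u) := by
    rw [gammaSLL_sq hu, expDeviance, ← exp_log hu, ← exp_add, ← exp_add, exp_log hu]
    ring_nf
  simp only [gaussianPDFReal, NNReal.coe_one, mul_one, sub_zero, hexp]
  ring

lemma hasDerivAt_sqrt_expDeviance {u : ℝ} (hu : 0 < u) (hu1 : u ≠ 1) :
    HasDerivAt (fun v ↦ √(expDeviance v)) ((1 - u⁻¹) / √(expDeviance u)) u := by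
  have hpos := expDeviance_pos hu hu1
  convert (hasDerivAt_expDeviance hu).sqrt hpos.ne' using 1
  field_simp

lemma hasDerivAt_gammaSLL {u : ℝ} (hu : 0 < u) (hu1 : u ≠ 1) :
    HasDerivAt gammaSLL ((1 - u⁻¹) / gammaSLL u) u := by
  rcases hu1.lt_or_gt with h | h
  · have hloc : (fun v ↦ -√(expDeviance v)) =ᶠ[𝓝 u] gammaSLL := by
      filter_upwards [eventually_lt_nhds h] with v hv
      rw [gammaSLL_of_le_one hv.le]
    rw [gammaSLL_of_le_one h.le, div_neg]
    exact ((hasDerivAt_sqrt_expDeviance hu hu1).neg).congr_of_eventuallyEq hloc.symm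
  · have hloc : (fun v ↦ √(expDeviance v)) =ᶠ[𝓝 u] gammaSLL := by
      filter_upwards [eventually_gt_nhds h] with v hv
      rw [gammaSLL_of_one_lt hv]
    rw [gammaSLL_of_one_lt h]
    exact (hasDerivAt_sqrt_expDeviance hu hu1).congr_of_eventuallyEq hloc.symm

lemma tendsto_expDeviance_atTop : Tendsto expDeviance atTop atTop := by
  refine tendsto_atTop_mono' _ ?_ (tendsto_atTop_add_const_right _ (-2) tendsto_id)
  filter_upwards [eventually_gt_atTop 0] with u hu
  -- tangent line of `log` at `e`
  have htangent := log_le_sub_one_of_pos (div_pos hu (exp_pos 1))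
  rw [log_div hu.ne' (exp_pos 1).ne', log_exp] at htangent
  have he : u / exp 1 ≤ u / 2 :=
    div_le_div_of_nonneg_left hu.le two_pos (by linarith [add_one_lt_exp one_ne_zero])
  dsimp only [id, expDeviance]
  linarith

lemma tendsto_expDeviance_nhdsGT_zero : Tendsto expDeviance (𝓝[>] 0) atTop := by
  refine tendsto_atTop_mono' _ ?_
    ((tendsto_neg_atBot_atTop.comp tendsto_log_nhdsGT_zero).const_mul_atTop two_pos |>.atTop_add
      (tendsto_const_nhds (x := (-2 : ℝ))))
  filter_upwards [self_mem_nhdsWithin] with u hu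
  simp only [Function.comp_apply, expDeviance]
  linarith [mem_Ioi.1 hu]

lemma tendsto_gammaSLL_atTop : Tendsto gammaSLL atTop atTop :=
  (tendsto_sqrt_atTop.comp tendsto_expDeviance_atTop).congr' <| by
    filter_upwards [eventually_gt_atTop 1] with u hu using (gammaSLL_of_one_lt hu).symm

lemma tendsto_gammaSLL_nhdsGT_zero : Tendsto gammaSLL (𝓝[>] 0) atBot := by
  have h := tendsto_neg_atTop_atBot.comp (tendsto_sqrt_atTop.comp tendsto_expDeviance_nhdsGT_zero)
  refine h.congr' ?_
  filter_upwards [Ioo_mem_nhdsGT one_pos] with u hu using (gammaSLL_of_le_one hu.2.le).symm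

lemma two_mul_sub_one_div_add_one_le_log {u : ℝ} (hu : 1 ≤ u) :
    2 * (u - 1) / (u + 1) ≤ log u := by
  have := le_log_one_add_of_nonneg (sub_nonneg.2 hu)
  rwa [add_sub_cancel, show u - 1 + 2 = u + 1 by ring] at this

lemma log_le_two_mul_sub_one_div_add_one {u : ℝ} (hu : 0 < u) (hu1 : u ≤ 1) :
    log u ≤ 2 * (u - 1) / (u + 1) := by
  have h := two_mul_sub_one_div_add_one_le_log ((one_le_inv₀ hu).2 hu1)
  have hinv : 2 * (u⁻¹ - 1) / (u⁻¹ + 1) = -(2 * (u - 1) / (u + 1)) := by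
    field_simp; ring
  rw [log_inv, hinv] at h
  linarith

lemma expDeviance_le {u : ℝ} (hu : 1 ≤ u) : expDeviance u ≤ 2 * (u - 1) ^ 2 / (u + 1) := by
  have h := two_mul_sub_one_div_add_one_le_log hu
  have hsplit : 2 * (u - 1) ^ 2 / (u + 1) = 2 * (u - 1 - 2 * (u - 1) / (u + 1)) := by
    field_simp; ring
  rw [hsplit, expDeviance]
  linarith

lemma le_expDeviance {u : ℝ} (hu : 0 < u) (hu1 : u ≤ 1) :
    2 * (u - 1) ^ 2 / (u + 1) ≤ expDeviance u := by
  have h := log_le_two_mul_sub_one_div_add_one hu hu1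
  have hsplit : 2 * (u - 1) ^ 2 / (u + 1) = 2 * (u - 1 - 2 * (u - 1) / (u + 1)) := by
    field_simp; ring
  rw [hsplit, expDeviance]
  linarith

lemma four_pi_le_exp_one_sq_mul {u : ℝ} (hu : 1 ≤ u) : 4 * π ≤ exp 1 ^ 2 * (u + 1) := by
  nlinarith [exp_one_gt_d9, pi_lt_d2]

lemma exp_one_sq_mul_le_four_pi {u : ℝ} (hu : u ≤ 7 / 10) : exp 1 ^ 2 * (u + 1) ≤ 4 * π := by
  nlinarith [exp_one_lt_d9, exp_pos 1, pi_gt_d6]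

lemma sqrt_two_pi_mul_gammaSLL_le_of_one_lt {u : ℝ} (hu : 1 < u) :
    √(2 * π) * gammaSLL u ≤ exp 1 * (u - 1) := by
  have hdev := expDeviance_le hu.le
  have hsq : 2 * π * expDeviance u ≤ (exp 1 * (u - 1)) ^ 2 := by
    calc 2 * π * expDeviance u ≤ 2 * π * (2 * (u - 1) ^ 2 / (u + 1)) := by gcongr
      _ = 4 * π / (u + 1) * (u - 1) ^ 2 := by ring
      _ ≤ exp 1 ^ 2 * (u - 1) ^ 2 := by
        gcongr
        rw [div_le_iff₀ (by linarith)]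
        exact four_pi_le_exp_one_sq_mul hu.le
      _ = (exp 1 * (u - 1)) ^ 2 := by ring
  rw [gammaSLL_of_one_lt hu, ← sqrt_mul (by positivity)]
  exact (sqrt_le_left (by nlinarith [exp_pos 1])).2 hsq

lemma sqrt_two_pi_mul_gammaSLL_le_of_le {u : ℝ} (hu : 0 < u) (hu1 : u ≤ 7 / 10) :
    √(2 * π) * gammaSLL u ≤ exp 1 * (u - 1) := by
  have hdev := le_expDeviance hu (by linarith)
  have hsq : (exp 1 * (1 - u)) ^ 2 ≤ 2 * π * expDeviance u := by
    calc (exp 1 * (1 - u)) ^ 2 = exp 1 ^ 2 * (u - 1) ^ 2 := by ring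
      _ ≤ 4 * π / (u + 1) * (u - 1) ^ 2 := by
        gcongr
        rw [le_div_iff₀ (by linarith)]
        exact exp_one_sq_mul_le_four_pi hu1
      _ = 2 * π * (2 * (u - 1) ^ 2 / (u + 1)) := by ring
      _ ≤ 2 * π * expDeviance u := by gcongr
  rw [gammaSLL_of_le_one (by linarith), mul_neg, ← sqrt_mul (by positivity)]
  have := (le_sqrt (by nlinarith [exp_pos 1])
    (mul_nonneg (by positivity) (expDeviance_nonneg hu))).2 hsq
  linarith

lemma gammaSLL_pos {u : ℝ} (hu : 1 < u) : 0 < gammaSLL u := by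
  rw [gammaSLL_of_one_lt hu]
  exact sqrt_pos.2 (expDeviance_pos (by linarith) hu.ne')

lemma gammaSLL_neg {u : ℝ} (hu : 0 < u) (hu1 : u < 1) : gammaSLL u < 0 := by
  rw [gammaSLL_of_le_one hu1.le]
  exact neg_neg_of_pos (sqrt_pos.2 (expDeviance_pos hu hu1.ne))

noncomputable def cdfGap (u : ℝ) : ℝ := 1 - exp (-u) - stdGaussianCDF (gammaSLL u)

lemma hasDerivAt_cdfGap {u : ℝ} (hu : 0 < u) (hu1 : u ≠ 1) :
    HasDerivAt cdfGap (exp (-u) * (1 - exp 1 * (u - 1) / (√(2 * π) * gammaSLL u))) u := by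
  have hγ : gammaSLL u ≠ 0 := by
    rcases hu1.lt_or_gt with h | h
    exacts [(gammaSLL_neg hu h).ne, (gammaSLL_pos h).ne']
  have hexp : HasDerivAt (fun v ↦ 1 - exp (-v)) (exp (-u)) u := by
    simpa using ((hasDerivAt_neg u).exp).const_sub 1
  have hΦγ := (hasDerivAt_stdGaussianCDF (gammaSLL u)).comp u (hasDerivAt_gammaSLL hu hu1)
  refine (hexp.sub hΦγ).congr_deriv ?_
  rw [gaussianPDFReal_gammaSLL hu]
  field_simp

lemma antitoneOn_cdfGap : AntitoneOn cdfGap (Ioi 1) := by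
  have hderiv {u : ℝ} (hu : 1 < u) := hasDerivAt_cdfGap (by linarith) hu.ne'
  refine antitoneOn_of_deriv_nonpos (convex_Ioi 1)
    (fun u hu ↦ (hderiv hu).continuousAt.continuousWithinAt)
    (fun u hu ↦ (hderiv (interior_Ioi.subset hu)).differentiableAt.differentiableWithinAt)
    fun u hu ↦ ?_
  rw [interior_Ioi] at hu
  rw [(hderiv hu).deriv]
  have hD : 0 < √(2 * π) * gammaSLL u := mul_pos (by positivity) (gammaSLL_pos hu)
  have := (one_le_div hD).2 (sqrt_two_pi_mul_gammaSLL_le_of_one_lt hu)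
  exact mul_nonpos_of_nonneg_of_nonpos (exp_pos _).le (by linarith)

lemma monotoneOn_cdfGap : MonotoneOn cdfGap (Ioc 0 (7 / 10)) := by
  have hderiv {u : ℝ} (hu : u ∈ Ioc 0 (7 / 10)) :=
    hasDerivAt_cdfGap hu.1 (by linarith [hu.2] : u < 1).ne
  refine monotoneOn_of_deriv_nonneg (convex_Ioc 0 (7 / 10))
    (fun u hu ↦ (hderiv hu).continuousAt.continuousWithinAt)
    (fun u hu ↦ (hderiv (interior_subset hu)).differentiableAt.differentiableWithinAt)
    fun u hu ↦ ?_
  rw [interior_Ioc] at hu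
  rw [(hderiv (Ioo_subset_Ioc_self hu)).deriv]
  have hD : √(2 * π) * gammaSLL u < 0 :=
    mul_neg_of_pos_of_neg (by positivity) (gammaSLL_neg hu.1 (by linarith [hu.2]))
  have := (div_le_one_of_neg hD).2 (sqrt_two_pi_mul_gammaSLL_le_of_le hu.1 hu.2.le)
  exact mul_nonneg (exp_pos _).le (by linarith)

lemma tendsto_cdfGap_atTop : Tendsto cdfGap atTop (𝓝 0) := by
  have hexp : Tendsto (fun u ↦ 1 - exp (-u)) atTop (𝓝 1) := by
    simpa using tendsto_exp_neg_atTop_nhds_zero.const_sub 1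
  have hΦ : Tendsto (stdGaussianCDF ∘ gammaSLL) atTop (𝓝 1) :=
    tendsto_stdGaussianCDF_atTop.comp tendsto_gammaSLL_atTop
  have h := hexp.sub hΦ
  rw [sub_self] at h
  exact h

lemma tendsto_cdfGap_nhdsGT_zero : Tendsto cdfGap (𝓝[>] 0) (𝓝 0) := by
  have hexp : Tendsto (fun u ↦ 1 - exp (-u)) (𝓝[>] 0) (𝓝 0) := by
    have : Continuous (fun u ↦ 1 - exp (-u)) := by fun_prop
    simpa using (this.tendsto 0).mono_left nhdsWithin_le_nhds
  have hΦ : Tendsto (stdGaussianCDF ∘ gammaSLL) (𝓝[>] 0) (𝓝 0) :=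
    tendsto_stdGaussianCDF_atBot.comp tendsto_gammaSLL_nhdsGT_zero
  have h := hexp.sub hΦ
  rw [sub_zero] at h
  exact h

lemma cdfGap_nonneg {u : ℝ} (hu : 0 < u) : 0 ≤ cdfGap u := by
  rcases le_or_gt u (7 / 10) with hsmall | hbig
  · refine le_of_tendsto tendsto_cdfGap_nhdsGT_zero ?_
    filter_upwards [Ioo_mem_nhdsGT hu] with v hv
    exact monotoneOn_cdfGap ⟨hv.1, hv.2.le.trans hsmall⟩ ⟨hu, hsmall⟩ hv.2.le
  rcases le_or_gt u 1 with hmid | hlarge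
  · have hΦ : stdGaussianCDF (gammaSLL u) ≤ 1 / 2 := by
      rw [← stdGaussianCDF_zero]
      refine monotone_stdGaussianCDF ?_
      rw [gammaSLL_of_le_one hmid]
      exact neg_nonpos.2 (sqrt_nonneg _)
    have hexp : exp (-u) ≤ 1 / 2 := by
      rw [← inv_eq_one_div, ← exp_log (two_pos (α := ℝ)), ← exp_neg, exp_le_exp]
      linarith [log_two_lt_d9]
    unfold cdfGap
    linarith
  · refine le_of_tendsto tendsto_cdfGap_atTop ?_
    filter_upwards [eventually_ge_atTop u] with v hv
    exact antitoneOn_cdfGap hlarge (hlarge.trans_le hv) hv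

theorem exponential_sll_dominated (θ x : ℝ) (hθ : 0 < θ) (hx : 0 < x) :
    stdGaussianCDF (gammaSLL (x / θ)) ≤ 1 - Real.exp (-x / θ) := by
  have h := cdfGap_nonneg (div_pos hx hθ)
  rw [cdfGap, ← neg_div] at h
  linarith
end

section
/- The saddle-point approximation is exact for the exponential family of exponential distributions: for X ~ Exp^θ with density f, one has f(x) = (sqrt(2π)/e)·φ(γ(x/θ))/x for all x > 0, where φ is the standard Gaussian density and γ(x) = sign(x-1)·sqrt(2(x-1-ln x)). -/
noncomputable def stdGaussianPDF (z : ℝ) : ℝ :=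
  Real.exp (-z ^ 2 / 2) / Real.sqrt (2 * Real.pi)

open Real

lemma gammaSLL_sq_s12 {x : ℝ} (hx : 0 < x) : gammaSLL x ^ 2 = 2 * (x - 1 - log x) := by
  have hnonneg : 0 ≤ 2 * (x - 1 - log x) := by linarith [log_le_sub_one_of_pos hx]
  unfold gammaSLL
  split_ifs <;> simp only [neg_sq, sq_sqrt hnonneg]

lemma exp_neg_gammaSLL_sq_div_two {x : ℝ} (hx : 0 < x) :
    exp (-gammaSLL x ^ 2 / 2) = exp 1 * x * exp (-x) := by
  calc exp (-gammaSLL x ^ 2 / 2) = exp (1 + log x + -x) := by rw [gammaSLL_sq_s12 hx]; ring_nf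
    _ = exp 1 * x * exp (-x) := by rw [exp_add, exp_add, exp_log hx]

lemma stdGaussianPDF_gammaSLL {x : ℝ} (hx : 0 < x) :
    stdGaussianPDF (gammaSLL x) = exp 1 * x * exp (-x) / sqrt (2 * π) := by
  rw [stdGaussianPDF, exp_neg_gammaSLL_sq_div_two hx]

theorem exponential_saddlepoint_exact (θ x : ℝ) (hθ : 0 < θ) (hx : 0 < x) :
    Real.exp (-x / θ) / θ =
      Real.sqrt (2 * Real.pi) / Real.exp 1 * stdGaussianPDF (gammaSLL (x / θ)) / x := by
  rw [stdGaussianPDF_gammaSLL (div_pos hx hθ), neg_div]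
  have hsqrt : 0 < sqrt (2 * π) := by positivity
  field_simp
end

section
/- The Kullback–Leibler divergence of the inverse Gaussian distribution IG(μ₁,λ) from IG(μ₂,λ) equals λ(μ₁-μ₂)²/(2μ₁μ₂²). -/
/-!
Both densities carry the same factor `√(λ / (2π w³))`, so the log-likelihood ratio is affine in
`w`, namely `λ (μ₂⁻² - μ₁⁻²) w / 2 + λ (μ₁⁻¹ - μ₂⁻¹)`, and the divergence only needs the total mass
`1` and the mean `μ₁` of `IG(μ₁, λ)`. With `a = λ / 2`, `b = λ / (2 μ²)` these are the integrals
`∫₀^∞ e^{-(a/x + b x)} x^{-3/2} dx` and `∫₀^∞ e^{-(a/x + b x)} x^{-1/2} dx`. The Cauchy–Schlömilch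
substitution `u = √(b x) - √(a / x)` satisfies `u² = a/x + b x - 2√(ab)` and turns
`(√b x^{-1/2} + √a x^{-3/2}) e^{-(a/x + b x)} dx / 2` into the Gaussian `e^{-u² - 2√(ab)} du`, while
the inversion `x ↦ a / (b x)` carries the first integral to `√(b / a)` times the second.
-/

open MeasureTheory Set Real

lemma integral_comp_div_Ioi {E : Type*} [NormedAddCommGroup E] [NormedSpace ℝ E] (f : ℝ → E)
    {c : ℝ} (hc : 0 < c) :
    ∫ x in Ioi 0, (c / x ^ 2) • f (c / x) = ∫ x in Ioi 0, f x := by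
  have hderiv (x : ℝ) (hx : x ∈ Ioi 0) :
      HasDerivWithinAt (fun x => c / x) (-(c / x ^ 2)) (Ioi 0) x := by
    simpa [div_eq_mul_inv] using ((hasDerivAt_inv (ne_of_gt hx)).const_mul c).hasDerivWithinAt
  have hinj : InjOn (fun x : ℝ => c / x) (Ioi 0) := fun x _ y _ h => by
    simpa [div_eq_mul_inv, hc.ne'] using h
  have himage : (fun x : ℝ => c / x) '' Ioi 0 = Ioi 0 := by
    ext y
    refine ⟨?_, fun hy => ⟨c / y, div_pos hc hy, div_div_cancel₀ hc.ne'⟩⟩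
    rintro ⟨x, hx, rfl⟩
    exact div_pos hc hx
  conv_rhs => rw [← himage, integral_image_eq_integral_abs_deriv_smul measurableSet_Ioi hderiv hinj]
  refine setIntegral_congr_fun measurableSet_Ioi fun x hx => ?_
  rw [abs_neg, abs_of_pos (div_pos hc (pow_pos hx 2))]

section CauchySchlomilch

variable {a b : ℝ}

noncomputable def cauchySchlomilch (a b x : ℝ) : ℝ := √b * √x - √a / √x

lemma div_add_mul_eq_cauchySchlomilch_sq (ha : 0 ≤ a) (hb : 0 ≤ b) {x : ℝ} (hx : 0 < x) :
    a / x + b * x = cauchySchlomilch a b x ^ 2 + 2 * √(a * b) := by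
  obtain ⟨r, hr, rfl⟩ : ∃ r > 0, r ^ 2 = x := ⟨√x, sqrt_pos.2 hx, sq_sqrt hx.le⟩
  rw [cauchySchlomilch, sqrt_sq hr.le, sqrt_mul ha]
  field_simp
  linear_combination -sq_sqrt ha - r ^ 4 * sq_sqrt hb

lemma hasDerivAt_cauchySchlomilch {x : ℝ} (hx : 0 < x) :
    HasDerivAt (cauchySchlomilch a b) ((√b + √a / x) / (2 * √x)) x := by
  have hsx : 0 < √x := sqrt_pos.2 hx
  have hsqrt := hasDerivAt_sqrt hx.ne'
  refine ((hsqrt.const_mul √b).sub ((hasDerivAt_const x √a).div hsqrt hsx.ne')).congr_deriv ?_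
  field_simp
  rw [sq_sqrt hx.le]
  ring

lemma strictMonoOn_cauchySchlomilch (hb : 0 < b) :
    StrictMonoOn (cauchySchlomilch a b) (Ioi 0) := by
  intro x hx y _ hxy
  have hsxy : √x < √y := sqrt_lt_sqrt (le_of_lt hx) hxy
  have hb' : √b * √x < √b * √y := mul_lt_mul_of_pos_left hsxy (sqrt_pos.2 hb)
  have ha' : √a / √y ≤ √a / √x :=
    div_le_div_of_nonneg_left (sqrt_nonneg a) (sqrt_pos.2 hx) hsxy.le
  simp only [cauchySchlomilch]
  linarith

lemma image_cauchySchlomilch (ha : 0 < a) (hb : 0 < b) :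
    cauchySchlomilch a b '' Ioi 0 = univ := by
  refine eq_univ_of_forall fun u => ?_
  set s := √(u ^ 2 + 4 * √a * √b)
  have hsa := sqrt_pos.2 ha
  have hsb := sqrt_pos.2 hb
  have hs : s ^ 2 = u ^ 2 + 4 * √a * √b := sq_sqrt (by positivity)
  have hus : 0 < u + s := by nlinarith [sqrt_nonneg (u ^ 2 + 4 * √a * √b)]
  -- the positive root of `√b t² - u t - √a = 0`
  set t := (u + s) / (2 * √b) with ht_def
  have ht : 0 < t := by positivity
  refine ⟨t ^ 2, pow_pos ht 2, ?_⟩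
  rw [cauchySchlomilch, sqrt_sq ht.le, ht_def]
  field_simp
  linear_combination hs

lemma eqOn_abs_deriv_smul_gaussian_comp_cauchySchlomilch (ha : 0 ≤ a) (hb : 0 ≤ b) :
    EqOn (fun x => |(√b + √a / x) / (2 * √x)| •
        (exp (-1 * cauchySchlomilch a b x ^ 2) * exp (-(2 * √(a * b)))))
      (fun x => (√b + √a / x) / (2 * √x) * exp (-(a / x + b * x))) (Ioi 0) := by
  intro x hx
  have hx : 0 < x := hx
  simp only
  rw [abs_of_nonneg (by positivity), smul_eq_mul, div_add_mul_eq_cauchySchlomilch_sq ha hb hx,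
    ← exp_add]
  ring_nf

lemma integrableOn_cauchySchlomilch_deriv_mul_exp (ha : 0 < a) (hb : 0 < b) :
    IntegrableOn (fun x => (√b + √a / x) / (2 * √x) * exp (-(a / x + b * x))) (Ioi 0) := by
  have hgauss : IntegrableOn (fun u => exp (-1 * u ^ 2) * exp (-(2 * √(a * b)))) univ :=
    ((integrable_exp_neg_mul_sq one_pos).mul_const _).integrableOn
  rw [← image_cauchySchlomilch ha hb, integrableOn_image_iff_integrableOn_abs_deriv_smul
    measurableSet_Ioi (fun x hx => (hasDerivAt_cauchySchlomilch hx).hasDerivWithinAt)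
    (strictMonoOn_cauchySchlomilch hb).injOn] at hgauss
  exact hgauss.congr_fun (eqOn_abs_deriv_smul_gaussian_comp_cauchySchlomilch ha.le hb.le)
    measurableSet_Ioi

lemma integral_cauchySchlomilch_deriv_mul_exp (ha : 0 < a) (hb : 0 < b) :
    ∫ x in Ioi 0, (√b + √a / x) / (2 * √x) * exp (-(a / x + b * x)) =
      √π * exp (-(2 * √(a * b))) := by
  rw [← setIntegral_congr_fun measurableSet_Ioi
      (eqOn_abs_deriv_smul_gaussian_comp_cauchySchlomilch ha.le hb.le),
    ← integral_image_eq_integral_abs_deriv_smul measurableSet_Ioi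
      (fun x hx => (hasDerivAt_cauchySchlomilch hx).hasDerivWithinAt)
      (strictMonoOn_cauchySchlomilch hb).injOn fun u => exp (-1 * u ^ 2) * exp (-(2 * √(a * b))),
    image_cauchySchlomilch ha hb, Measure.restrict_univ, integral_mul_const, integral_gaussian,
    div_one]

end CauchySchlomilch

section BesselIntegrals

variable {a b : ℝ}

lemma cauchySchlomilch_deriv_mul_exp_eq {x : ℝ} (hx : 0 < x) :
    (√b + √a / x) / (2 * √x) * exp (-(a / x + b * x)) =
      √b / 2 * (exp (-(a / x + b * x)) / √x) +
        √a / 2 * (exp (-(a / x + b * x)) / (x * √x)) := by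
  have hsx : 0 < √x := sqrt_pos.2 hx
  field_simp

lemma integrableOn_exp_neg_div_add_mul_div_sqrt (ha : 0 < a) (hb : 0 < b) :
    IntegrableOn (fun x => exp (-(a / x + b * x)) / √x) (Ioi 0) ∧
      IntegrableOn (fun x => exp (-(a / x + b * x)) / (x * √x)) (Ioi 0) := by
  have hsum : IntegrableOn ((fun x => √b / 2 * (exp (-(a / x + b * x)) / √x)) +
      fun x => √a / 2 * (exp (-(a / x + b * x)) / (x * √x))) (Ioi 0) :=
    (integrableOn_cauchySchlomilch_deriv_mul_exp ha hb).congr_fun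
      (fun x hx => cauchySchlomilch_deriv_mul_exp_eq hx) measurableSet_Ioi
  have hmeas : ContinuousOn (fun x => √b / 2 * (exp (-(a / x + b * x)) / √x)) (Ioi 0) := by
    fun_prop (disch := intro x hx; simp_all [ne_of_gt])
  have hnonneg (c : ℝ) (f : ℝ → ℝ) (hf : ∀ x, 0 < x → 0 ≤ f x) :
      0 ≤ᵐ[volume.restrict (Ioi 0)] fun x => √c / 2 * f x :=
    (ae_restrict_iff' measurableSet_Ioi).2 (.of_forall fun x hx => by have := hf x hx; positivity)
  obtain ⟨hI, hJ⟩ := (integrable_add_iff_of_nonneg (hmeas.aestronglyMeasurable measurableSet_Ioi)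
    (hnonneg _ _ fun x hx => by positivity) (hnonneg _ _ fun x hx => by positivity)).1 hsum
  have hunit (c : ℝ) (hc : 0 < c) : IsUnit (√c / 2) := (div_pos (sqrt_pos.2 hc) two_pos).ne'.isUnit
  exact ⟨(integrable_const_mul_iff (hunit b hb) _).1 hI,
    (integrable_const_mul_iff (hunit a ha) _).1 hJ⟩

lemma integral_exp_neg_div_add_mul_div_mul_sqrt_eq (ha : 0 < a) (hb : 0 < b) :
    ∫ x in Ioi 0, exp (-(a / x + b * x)) / (x * √x) =
      √b / √a * ∫ x in Ioi 0, exp (-(a / x + b * x)) / √x := by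
  rw [← integral_comp_div_Ioi _ (div_pos ha hb), ← integral_const_mul]
  refine setIntegral_congr_fun measurableSet_Ioi fun x hx => ?_
  have hx : 0 < x := hx
  have hsx : 0 < √x := sqrt_pos.2 hx
  have hsa : 0 < √a := sqrt_pos.2 ha
  have hsb : 0 < √b := sqrt_pos.2 hb
  have h₁ : a / (a / b / x) = b * x := by field_simp
  have h₂ : b * (a / b / x) = a / x := by field_simp
  rw [h₁, h₂, add_comm (b * x), sqrt_div' _ hx.le, sqrt_div' _ hb.le, smul_eq_mul]
  field_simp
  exact sq_sqrt hx.le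

lemma integral_exp_neg_div_add_mul_div_sqrt (ha : 0 < a) (hb : 0 < b) :
    ∫ x in Ioi 0, exp (-(a / x + b * x)) / √x = √π / √b * exp (-(2 * √(a * b))) := by
  have h := integral_cauchySchlomilch_deriv_mul_exp ha hb
  obtain ⟨hI, hJ⟩ := integrableOn_exp_neg_div_add_mul_div_sqrt ha hb
  rw [setIntegral_congr_fun measurableSet_Ioi fun x hx => cauchySchlomilch_deriv_mul_exp_eq hx,
    integral_add (hI.const_mul _) (hJ.const_mul _), integral_const_mul, integral_const_mul,
    integral_exp_neg_div_add_mul_div_mul_sqrt_eq ha hb] at h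
  have hsa : 0 < √a := sqrt_pos.2 ha
  have hsb : 0 < √b := sqrt_pos.2 hb
  set I := ∫ x in Ioi 0, exp (-(a / x + b * x)) / √x
  rw [div_mul_eq_mul_div, eq_div_iff hsb.ne', ← h]
  field_simp
  ring

lemma integral_exp_neg_div_add_mul_div_mul_sqrt (ha : 0 < a) (hb : 0 < b) :
    ∫ x in Ioi 0, exp (-(a / x + b * x)) / (x * √x) = √π / √a * exp (-(2 * √(a * b))) := by
  have hsa : 0 < √a := sqrt_pos.2 ha
  have hsb : 0 < √b := sqrt_pos.2 hb
  rw [integral_exp_neg_div_add_mul_div_mul_sqrt_eq ha hb,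
    integral_exp_neg_div_add_mul_div_sqrt ha hb]
  field_simp

end BesselIntegrals

noncomputable def inverseGaussianPDF (μ lam w : ℝ) : ℝ :=
  √(lam / (2 * π * w ^ 3)) * exp (-lam * (w - μ) ^ 2 / (2 * μ ^ 2 * w))

section InverseGaussian

variable {μ lam : ℝ}

lemma inverseGaussianPDF_eq (hμ : μ ≠ 0) {w : ℝ} (hw : 0 < w) :
    inverseGaussianPDF μ lam w = √(lam / (2 * π)) * exp (lam / μ) *
      (exp (-(lam / 2 / w + lam / (2 * μ ^ 2) * w)) / (w * √w)) := by
  have hsqrt : √(lam / (2 * π * w ^ 3)) = √(lam / (2 * π)) / (w * √w) := by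
    rw [← div_div, sqrt_div' _ (by positivity), pow_succ, sqrt_mul (sq_nonneg w), sqrt_sq hw.le]
  have hexp : -lam * (w - μ) ^ 2 / (2 * μ ^ 2 * w) =
      lam / μ + -(lam / 2 / w + lam / (2 * μ ^ 2) * w) := by
    field_simp
    ring
  rw [inverseGaussianPDF, hsqrt, hexp, exp_add]
  ring

lemma mul_inverseGaussianPDF_eq (hμ : μ ≠ 0) {w : ℝ} (hw : 0 < w) :
    w * inverseGaussianPDF μ lam w = √(lam / (2 * π)) * exp (lam / μ) *
      (exp (-(lam / 2 / w + lam / (2 * μ ^ 2) * w)) / √w) := by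
  have : 0 < √w := sqrt_pos.2 hw
  rw [inverseGaussianPDF_eq hμ hw]
  field_simp

lemma integrableOn_inverseGaussianPDF (hμ : μ ≠ 0) (hlam : 0 < lam) :
    IntegrableOn (inverseGaussianPDF μ lam) (Ioi 0) := by
  have hb : 0 < lam / (2 * μ ^ 2) := by positivity
  refine IntegrableOn.congr_fun ?_ (fun w hw => (inverseGaussianPDF_eq hμ hw).symm)
    measurableSet_Ioi
  exact (integrableOn_exp_neg_div_add_mul_div_sqrt (half_pos hlam) hb).2.const_mul _

lemma integrableOn_mul_inverseGaussianPDF (hμ : μ ≠ 0) (hlam : 0 < lam) :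
    IntegrableOn (fun w => w * inverseGaussianPDF μ lam w) (Ioi 0) := by
  have hb : 0 < lam / (2 * μ ^ 2) := by positivity
  refine IntegrableOn.congr_fun ?_ (fun w hw => (mul_inverseGaussianPDF_eq hμ hw).symm)
    measurableSet_Ioi
  exact (integrableOn_exp_neg_div_add_mul_div_sqrt (half_pos hlam) hb).1.const_mul _

lemma sqrt_div_two_mul_div_two_mul_sq (hμ : 0 < μ) (hlam : 0 < lam) :
    √(lam / 2 * (lam / (2 * μ ^ 2))) = lam / (2 * μ) := by
  rw [show lam / 2 * (lam / (2 * μ ^ 2)) = (lam / (2 * μ)) ^ 2 by field_simp]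
  exact sqrt_sq (by positivity)

lemma sqrt_div_two_pi_mul_sqrt_pi (hlam : 0 ≤ lam) : √(lam / (2 * π)) * √π = √(lam / 2) := by
  rw [← sqrt_mul (by positivity)]
  congr 1
  field_simp

lemma integral_inverseGaussianPDF (hμ : 0 < μ) (hlam : 0 < lam) :
    ∫ w in Ioi 0, inverseGaussianPDF μ lam w = 1 := by
  rw [setIntegral_congr_fun measurableSet_Ioi fun w hw => inverseGaussianPDF_eq hμ.ne' hw,
    integral_const_mul, integral_exp_neg_div_add_mul_div_mul_sqrt (by positivity) (by positivity),
    sqrt_div_two_mul_div_two_mul_sq hμ hlam]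
  have hsa : 0 < √(lam / 2) := sqrt_pos.2 (by positivity)
  field_simp
  rw [mul_right_comm _ (exp _), mul_assoc, ← exp_add, add_neg_cancel, exp_zero, mul_one,
    sqrt_div_two_pi_mul_sqrt_pi hlam.le]

lemma integral_mul_inverseGaussianPDF (hμ : 0 < μ) (hlam : 0 < lam) :
    ∫ w in Ioi 0, w * inverseGaussianPDF μ lam w = μ := by
  rw [setIntegral_congr_fun measurableSet_Ioi fun w hw => mul_inverseGaussianPDF_eq hμ.ne' hw,
    integral_const_mul, integral_exp_neg_div_add_mul_div_sqrt (by positivity) (by positivity),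
    sqrt_div_two_mul_div_two_mul_sq hμ hlam]
  have hsb : √(lam / (2 * μ ^ 2)) = √(lam / 2) / μ := by
    rw [← div_div, sqrt_div' _ (sq_nonneg μ), sqrt_sq hμ.le]
  have hsa : 0 < √(lam / 2) := sqrt_pos.2 (by positivity)
  rw [hsb]
  field_simp
  rw [mul_right_comm _ (exp _), mul_assoc, ← exp_add, add_neg_cancel, exp_zero, mul_one,
    sqrt_div_two_pi_mul_sqrt_pi hlam.le]

lemma log_inverseGaussianPDF_div {μ₁ μ₂ w : ℝ} (h₁ : μ₁ ≠ 0) (h₂ : μ₂ ≠ 0) (hlam : 0 < lam)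
    (hw : 0 < w) :
    log (inverseGaussianPDF μ₁ lam w / inverseGaussianPDF μ₂ lam w) =
      lam / 2 * (1 / μ₂ ^ 2 - 1 / μ₁ ^ 2) * w + lam * (1 / μ₁ - 1 / μ₂) := by
  have hc : 0 < √(lam / (2 * π * w ^ 3)) := sqrt_pos.2 (by positivity)
  rw [inverseGaussianPDF, inverseGaussianPDF, mul_div_mul_left _ _ hc.ne', ← exp_sub, log_exp]
  field_simp
  ring

end InverseGaussian

theorem kl_inverseGaussian (μ₁ μ₂ lam : ℝ) (h₁ : 0 < μ₁) (h₂ : 0 < μ₂) (hlam : 0 < lam) :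
    ∫ w in Set.Ioi (0 : ℝ),
        Real.log
            ((Real.sqrt (lam / (2 * Real.pi * w ^ 3)) *
                Real.exp (-lam * (w - μ₁) ^ 2 / (2 * μ₁ ^ 2 * w))) /
              (Real.sqrt (lam / (2 * Real.pi * w ^ 3)) *
                Real.exp (-lam * (w - μ₂) ^ 2 / (2 * μ₂ ^ 2 * w)))) *
          (Real.sqrt (lam / (2 * Real.pi * w ^ 3)) *
            Real.exp (-lam * (w - μ₁) ^ 2 / (2 * μ₁ ^ 2 * w)))
      = lam * (μ₁ - μ₂) ^ 2 / (2 * μ₁ * μ₂ ^ 2) := by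
  change ∫ w in Ioi 0, log (inverseGaussianPDF μ₁ lam w / inverseGaussianPDF μ₂ lam w) *
    inverseGaussianPDF μ₁ lam w = _
  have hlog (w : ℝ) (hw : w ∈ Ioi 0) :
      log (inverseGaussianPDF μ₁ lam w / inverseGaussianPDF μ₂ lam w) *
          inverseGaussianPDF μ₁ lam w =
        lam / 2 * (1 / μ₂ ^ 2 - 1 / μ₁ ^ 2) * (w * inverseGaussianPDF μ₁ lam w) +
          lam * (1 / μ₁ - 1 / μ₂) * inverseGaussianPDF μ₁ lam w := by
    rw [log_inverseGaussianPDF_div h₁.ne' h₂.ne' hlam hw]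
    ring
  rw [setIntegral_congr_fun measurableSet_Ioi hlog,
    integral_add ((integrableOn_mul_inverseGaussianPDF h₁.ne' hlam).const_mul _)
      ((integrableOn_inverseGaussianPDF h₁.ne' hlam).const_mul _),
    integral_const_mul, integral_const_mul, integral_mul_inverseGaussianPDF h₁ hlam,
    integral_inverseGaussianPDF h₁ hlam]
  field_simp
  ring
end
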